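/- Let ε = (ε_1,…,ε_N)′ be i.i.d. real random variables with E(ε_i) = 0, E(ε_i²) = σ², E(ε_i⁴) = μ₄ < ∞, let ε* = Jε with entries ε*_i, and define π₁ = Σ_r (J_rr)², π₂ = Σ_r Σ_s (J_rs)⁴, and κ̃ = Σ_i (ε*_i)⁴/π₂ − 3·(π₁/π₂)·( Σ_i (ε*_i)² / N* )². Then E(κ̃) = μ₄ − 3σ⁴ − 3·(π₁/π₂)·[ (μ₄ − 3σ⁴)·π₁/N*² + 2σ⁴/N* ]. -/

import Mathlib

open Matrix Finset MeasureTheory ProbabilityTheory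
open scoped Kronecker

/-- The two-way within-transformation matrix
`J = (I_T − T⁻¹ι_Tι_T′) ⊗ (I_n − n⁻¹ι_nι_n′)`. -/
noncomputable def twoWayJ (n T : ℕ) : Matrix (Fin T × Fin n) (Fin T × Fin n) ℝ :=
  ((1 : Matrix (Fin T) (Fin T) ℝ) - (T : ℝ)⁻¹ • Matrix.of (fun _ _ => (1 : ℝ))) ⊗ₖ
  ((1 : Matrix (Fin n) (Fin n) ℝ) - (n : ℝ)⁻¹ • Matrix.of (fun _ _ => (1 : ℝ)))

/-!
The estimator combines two quartic forms in `ε`: `Σ_i (ε*_i)⁴ = Σ_i (J_i ⬝ ε)⁴` and, since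
`J'J = J`, `(Σ_i (ε*_i)²)² = (ε'Jε)²`. Their expectations only involve the mixed moments
`E[ε_a ε_b ε_c ε_d]`, which vanish unless the indices pair up; this gives
`E[(ε'Aε)(ε'Bε)] = σ⁴ (tr A tr B + tr ABᵀ + tr AB) + (μ₄ - 3σ⁴) Σ_a A_aa B_aa`.
For `J` symmetric and idempotent the rows satisfy `J_i ⬝ J_i = J_ii` and `tr J = N*`, so
`E Σ_i (ε*_i)⁴ = 3σ⁴π₁ + (μ₄ - 3σ⁴)π₂` and `E (ε'Jε)² = σ⁴(N*² + 2N*) + (μ₄ - 3σ⁴)π₁`.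
-/

section FourthMoments

variable {Ω ι : Type*} [MeasureSpace Ω] {ε : ι → Ω → ℝ}

/-- Isserlis-type formula for `E[ε_a ε_b ε_c ε_d]`: the three pairings contribute `σ2 ^ 2` each,
and the all-equal case, counted three times among them, is corrected to `μ4`. -/
def mixedFourthMoment [DecidableEq ι] (σ2 μ4 : ℝ) (a b c d : ι) : ℝ :=
  σ2 ^ 2 * ((if a = b ∧ c = d then 1 else 0) + (if a = c ∧ b = d then 1 else 0)
      + (if a = d ∧ b = c then 1 else 0))
    + (μ4 - 3 * σ2 ^ 2) * (if a = b ∧ a = c ∧ a = d then 1 else 0)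

lemma memLp_four_of_integrable_pow_four {α : Type*} [MeasurableSpace α] {μ : Measure α}
    {X : α → ℝ} (hX : AEStronglyMeasurable X μ) (h : Integrable (fun x => X x ^ 4) μ) :
    MemLp X 4 μ := by
  rw [← integrable_norm_rpow_iff hX (by norm_num) (by norm_num)]
  simpa [Real.norm_eq_abs, Even.pow_abs (by decide : Even 4)] using h

lemma integrable_mul_mul_mul (hL4 : ∀ i, MemLp (ε i) 4 ℙ) (a b c d : ι) :
    Integrable (fun ω => ε a ω * ε b ω * ε c ω * ε d ω) ℙ := by
  have : ENNReal.HolderTriple 4 4 2 := ⟨by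
    rw [← two_mul, show (4 : ENNReal) = 2 * 2 by norm_num, ENNReal.mul_inv (by simp) (by simp),
      ← mul_assoc, ENNReal.mul_inv_cancel (by simp) (by simp), one_mul]⟩
  simpa only [Pi.mul_def, mul_assoc] using
    ((hL4 b).mul' (r := 2) (hL4 a)).integrable_mul ((hL4 d).mul' (r := 2) (hL4 c))

lemma integral_mul_mul_mul_eq_zero_of_ne [DecidableEq ι] (hmeas : ∀ i, Measurable (ε i))
    (hindep : iIndepFun ε ℙ) {a b c d : ι} (hd : ∫ ω, ε d ω = 0) (had : a ≠ d) (hbd : b ≠ d)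
    (hcd : c ≠ d) :
    ∫ ω, ε a ω * ε b ω * ε c ω * ε d ω = 0 := by
  have hST : Disjoint ({a, b, c} : Finset ι) {d} := by
    simp [had.symm, hbd.symm, hcd.symm]
  have hind : IndepFun (fun ω => ε a ω * ε b ω * ε c ω) (ε d) :=
    (hindep.indepFun_finset _ _ hST hmeas).comp
      (φ := fun x : ({a, b, c} : Finset ι) → ℝ => x ⟨a, by simp⟩ * x ⟨b, by simp⟩ * x ⟨c, by simp⟩)
      (ψ := fun y : ({d} : Finset ι) → ℝ => y ⟨d, by simp⟩) (by fun_prop) (by fun_prop)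
  rw [hind.integral_fun_mul_eq_mul_integral (by fun_prop) (hmeas d).aestronglyMeasurable, hd,
    mul_zero]

lemma integral_mul_self_mul_mul_self {σ2 : ℝ} (hmeas : ∀ i, Measurable (ε i))
    (hindep : iIndepFun ε ℙ) (hvar : ∀ i, ∫ ω, ε i ω ^ 2 = σ2) {a c : ι} (hac : a ≠ c) :
    ∫ ω, ε a ω * ε a ω * ε c ω * ε c ω = σ2 ^ 2 := by
  have := (hindep.indepFun_mul_mul hmeas a a c c hac hac hac hac).integral_fun_mul_eq_mul_integral
    (by fun_prop) (by fun_prop)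
  simp only [Pi.mul_apply, ← sq, hvar] at this
  simpa [mul_assoc, sq] using this

variable [DecidableEq ι] {σ2 μ4 : ℝ}

lemma integral_mul_mul_mul_self (hmeas : ∀ i, Measurable (ε i)) (hindep : iIndepFun ε ℙ)
    (hmean : ∀ i, ∫ ω, ε i ω = 0) (hvar : ∀ i, ∫ ω, ε i ω ^ 2 = σ2)
    (hm4 : ∀ i, ∫ ω, ε i ω ^ 4 = μ4) (a b c : ι) :
    ∫ ω, ε a ω * ε b ω * ε c ω * ε c ω = mixedFourthMoment σ2 μ4 a b c c := by
  have zero {a b c d : ι} := integral_mul_mul_mul_eq_zero_of_ne (a := a) (b := b) (c := c)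
    hmeas hindep (hmean d)
  rcases eq_or_ne a c with rfl | hac
  · rcases eq_or_ne b a with rfl | hba
    · rw [show ∫ ω, ε b ω * ε b ω * ε b ω * ε b ω = ∫ ω, ε b ω ^ 4 by
        congr 1; ext ω; ring, hm4]
      simp only [mixedFourthMoment, and_self, ↓reduceIte, mul_one]
      ring
    · rw [show ∫ ω, ε a ω * ε b ω * ε a ω * ε a ω = ∫ ω, ε a ω * ε a ω * ε a ω * ε b ω by
        congr 1; ext ω; ring, zero hba.symm hba.symm hba.symm]
      simp [mixedFourthMoment, hba, hba.symm]
  · rcases eq_or_ne b c with rfl | hbc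
    · rw [show ∫ ω, ε a ω * ε b ω * ε b ω * ε b ω = ∫ ω, ε b ω * ε b ω * ε b ω * ε a ω by
        congr 1; ext ω; ring, zero hac.symm hac.symm hac.symm]
      simp [mixedFourthMoment, hac]
    · rcases eq_or_ne a b with rfl | hab
      · rw [integral_mul_self_mul_mul_self hmeas hindep hvar hac]
        simp [mixedFourthMoment, hac]
      · rw [show ∫ ω, ε a ω * ε b ω * ε c ω * ε c ω = ∫ ω, ε b ω * ε c ω * ε c ω * ε a ω by
          congr 1; ext ω; ring, zero hab.symm hac.symm hac.symm]
        simp [mixedFourthMoment, hab, hac]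

lemma integral_mul_mul_mul (hmeas : ∀ i, Measurable (ε i)) (hindep : iIndepFun ε ℙ)
    (hmean : ∀ i, ∫ ω, ε i ω = 0) (hvar : ∀ i, ∫ ω, ε i ω ^ 2 = σ2)
    (hm4 : ∀ i, ∫ ω, ε i ω ^ 4 = μ4) (a b c d : ι) :
    ∫ ω, ε a ω * ε b ω * ε c ω * ε d ω = mixedFourthMoment σ2 μ4 a b c d := by
  have zero {a b c d : ι} := integral_mul_mul_mul_eq_zero_of_ne (a := a) (b := b) (c := c)
    hmeas hindep (hmean d)
  rcases eq_or_ne c d with rfl | hcd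
  · exact integral_mul_mul_mul_self hmeas hindep hmean hvar hm4 a b c
  rcases eq_or_ne b d with rfl | hbd
  · rcases eq_or_ne a c with rfl | hac
    · rw [show ∫ ω, ε a ω * ε b ω * ε a ω * ε b ω = ∫ ω, ε a ω * ε a ω * ε b ω * ε b ω by
        congr 1; ext ω; ring, integral_mul_self_mul_mul_self hmeas hindep hvar hcd]
      simp [mixedFourthMoment, hcd, hcd.symm]
    · rw [show ∫ ω, ε a ω * ε b ω * ε c ω * ε b ω = ∫ ω, ε a ω * ε b ω * ε b ω * ε c ω by
        congr 1; ext ω; ring, zero hac hcd.symm hcd.symm]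
      simp [mixedFourthMoment, hac, hcd, hcd.symm]
  rcases eq_or_ne a d with rfl | had
  · rcases eq_or_ne b c with rfl | hbc
    · rw [show ∫ ω, ε a ω * ε b ω * ε b ω * ε a ω = ∫ ω, ε a ω * ε a ω * ε b ω * ε b ω by
        congr 1; ext ω; ring, integral_mul_self_mul_mul_self hmeas hindep hvar hbd.symm]
      simp [mixedFourthMoment, hbd, hbd.symm]
    · rw [show ∫ ω, ε a ω * ε b ω * ε c ω * ε a ω = ∫ ω, ε a ω * ε b ω * ε a ω * ε c ω by
        congr 1; ext ω; ring, zero hcd.symm hbc hcd.symm]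
      simp [mixedFourthMoment, hbc, hcd, hcd.symm]
  · rw [zero had hbd hcd]
    simp [mixedFourthMoment, had, hbd, hcd]

end FourthMoments

section QuadraticForms

variable {ι : Type*} [Fintype ι]

theorem sum_mul_mixedFourthMoment [DecidableEq ι] (A B : Matrix ι ι ℝ) (σ2 μ4 : ℝ) :
    ∑ a, ∑ b, ∑ c, ∑ d, A a b * B c d * mixedFourthMoment σ2 μ4 a b c d
      = σ2 ^ 2 * (A.trace * B.trace + (A * Bᵀ).trace + (A * B).trace)
        + (μ4 - 3 * σ2 ^ 2) * ∑ a, A a a * B a a := by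
  simp only [mixedFourthMoment, ite_and, mul_add, mul_ite, mul_one, mul_zero, sum_add_distrib,
    sum_ite_irrel, sum_ite_eq, mem_univ, ↓reduceIte, sum_const_zero, ← sum_mul, trace, diag_apply,
    sum_mul_sum, Matrix.mul_apply, transpose_apply]
  ring

lemma dotProduct_mulVec_mul_dotProduct_mulVec (A B : Matrix ι ι ℝ) (x : ι → ℝ) :
    (x ⬝ᵥ A *ᵥ x) * (x ⬝ᵥ B *ᵥ x)
      = ∑ a, ∑ b, ∑ c, ∑ d, A a b * B c d * (x a * x b * x c * x d) := by
  rw [mul_comm]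
  simp only [dotProduct, mulVec, mul_sum, sum_mul]
  refine sum_congr rfl fun a _ => sum_congr rfl fun b _ => sum_congr rfl fun c _ =>
    sum_congr rfl fun d _ => ?_
  ring

lemma dotProduct_vecMulVec_mulVec_self (u x : ι → ℝ) :
    x ⬝ᵥ vecMulVec u u *ᵥ x = (u ⬝ᵥ x) ^ 2 := by
  rw [vecMulVec_mulVec]
  simp [dotProduct_comm x u, sq]

lemma trace_vecMulVec_mul_vecMulVec_self (u : ι → ℝ) :
    (vecMulVec u u * vecMulVec u u).trace = (u ⬝ᵥ u) ^ 2 := by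
  simp [vecMulVec_mul_vecMulVec, sq]

variable {Ω : Type*} [MeasureSpace Ω] {ε : ι → Ω → ℝ} {σ2 μ4 : ℝ}

lemma integrable_dotProduct_mulVec_mul_dotProduct_mulVec (hL4 : ∀ i, MemLp (ε i) 4 ℙ)
    (A B : Matrix ι ι ℝ) :
    Integrable (fun ω => ((fun i => ε i ω) ⬝ᵥ A *ᵥ fun i => ε i ω)
      * ((fun i => ε i ω) ⬝ᵥ B *ᵥ fun i => ε i ω)) ℙ := by
  have := integrable_mul_mul_mul hL4
  simp only [dotProduct_mulVec_mul_dotProduct_mulVec]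
  fun_prop

theorem integral_dotProduct_mulVec_mul_dotProduct_mulVec [DecidableEq ι]
    (hmeas : ∀ i, Measurable (ε i)) (hindep : iIndepFun ε ℙ) (hmean : ∀ i, ∫ ω, ε i ω = 0)
    (hvar : ∀ i, ∫ ω, ε i ω ^ 2 = σ2) (hm4 : ∀ i, ∫ ω, ε i ω ^ 4 = μ4)
    (hL4 : ∀ i, MemLp (ε i) 4 ℙ) (A B : Matrix ι ι ℝ) :
    ∫ ω, ((fun i => ε i ω) ⬝ᵥ A *ᵥ fun i => ε i ω) * ((fun i => ε i ω) ⬝ᵥ B *ᵥ fun i => ε i ω)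
      = σ2 ^ 2 * (A.trace * B.trace + (A * Bᵀ).trace + (A * B).trace)
        + (μ4 - 3 * σ2 ^ 2) * ∑ a, A a a * B a a := by
  have := integrable_mul_mul_mul hL4
  simp (disch := intros; fun_prop) only [dotProduct_mulVec_mul_dotProduct_mulVec,
    integral_finsetSum, integral_const_mul, integral_mul_mul_mul hmeas hindep hmean hvar hm4]
  exact sum_mul_mixedFourthMoment A B σ2 μ4

lemma integrable_dotProduct_pow_four (hL4 : ∀ i, MemLp (ε i) 4 ℙ) (u : ι → ℝ) :
    Integrable (fun ω => (u ⬝ᵥ fun i => ε i ω) ^ 4) ℙ := by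
  simpa only [dotProduct_vecMulVec_mulVec_self, ← pow_add] using
    integrable_dotProduct_mulVec_mul_dotProduct_mulVec hL4 (vecMulVec u u) (vecMulVec u u)

theorem integral_dotProduct_pow_four [DecidableEq ι]
    (hmeas : ∀ i, Measurable (ε i)) (hindep : iIndepFun ε ℙ) (hmean : ∀ i, ∫ ω, ε i ω = 0)
    (hvar : ∀ i, ∫ ω, ε i ω ^ 2 = σ2) (hm4 : ∀ i, ∫ ω, ε i ω ^ 4 = μ4)
    (hL4 : ∀ i, MemLp (ε i) 4 ℙ) (u : ι → ℝ) :
    ∫ ω, (u ⬝ᵥ fun i => ε i ω) ^ 4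
      = 3 * σ2 ^ 2 * (u ⬝ᵥ u) ^ 2 + (μ4 - 3 * σ2 ^ 2) * ∑ i, u i ^ 4 := by
  have := integral_dotProduct_mulVec_mul_dotProduct_mulVec hmeas hindep hmean hvar hm4 hL4
    (vecMulVec u u) (vecMulVec u u)
  simp only [dotProduct_vecMulVec_mulVec_self, ← pow_add, transpose_vecMulVec,
    trace_vecMulVec_mul_vecMulVec_self, trace_vecMulVec, vecMulVec_apply] at this
  rw [this]
  ring_nf

end QuadraticForms

section KurtosisEstimator

variable {ι : Type*} [Fintype ι] {J : Matrix ι ι ℝ}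

lemma row_dotProduct_row (hJ : J.IsSymm) (hJJ : IsIdempotentElem J) (i : ι) :
    J.row i ⬝ᵥ J.row i = J i i := by
  conv_rhs => rw [← hJJ.eq]
  simp only [mul_apply, dotProduct, row_apply]
  exact sum_congr rfl fun j _ => by rw [hJ.apply j i]

lemma sum_mulVec_sq (hJ : J.IsSymm) (hJJ : IsIdempotentElem J) (x : ι → ℝ) :
    ∑ i, (J *ᵥ x) i ^ 2 = x ⬝ᵥ J *ᵥ x := by
  rw [show ∑ i, (J *ᵥ x) i ^ 2 = (J *ᵥ x) ⬝ᵥ (J *ᵥ x) by simp [dotProduct, sq],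
    dotProduct_mulVec, ← mulVec_transpose, hJ.eq, mulVec_mulVec, hJJ.eq, dotProduct_comm]

variable {Ω : Type*} [MeasureSpace Ω] {ε : ι → Ω → ℝ} {σ2 μ4 : ℝ}

lemma integrable_sum_mulVec_pow_four (hL4 : ∀ i, MemLp (ε i) 4 ℙ) :
    Integrable (fun ω => ∑ i, (J *ᵥ fun j => ε j ω) i ^ 4) ℙ :=
  integrable_finsetSum _ fun i _ => integrable_dotProduct_pow_four hL4 (J.row i)

lemma integrable_sum_mulVec_sq_sq (hJ : J.IsSymm) (hJJ : IsIdempotentElem J)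
    (hL4 : ∀ i, MemLp (ε i) 4 ℙ) :
    Integrable (fun ω => (∑ i, (J *ᵥ fun j => ε j ω) i ^ 2) ^ 2) ℙ := by
  simp only [sum_mulVec_sq hJ hJJ]
  simpa only [sq] using
    integrable_dotProduct_mulVec_mul_dotProduct_mulVec hL4 J J

variable [DecidableEq ι] (hmeas : ∀ i, Measurable (ε i)) (hindep : iIndepFun ε ℙ)
  (hmean : ∀ i, ∫ ω, ε i ω = 0) (hvar : ∀ i, ∫ ω, ε i ω ^ 2 = σ2)
  (hm4 : ∀ i, ∫ ω, ε i ω ^ 4 = μ4) (hL4 : ∀ i, MemLp (ε i) 4 ℙ)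
include hmeas hindep hmean hvar hm4 hL4

theorem integral_sum_mulVec_pow_four (hJ : J.IsSymm) (hJJ : IsIdempotentElem J) :
    ∫ ω, ∑ i, (J *ᵥ fun j => ε j ω) i ^ 4
      = 3 * σ2 ^ 2 * ∑ i, J i i ^ 2 + (μ4 - 3 * σ2 ^ 2) * ∑ i, ∑ j, J i j ^ 4 := by
  simp only [mulVec_apply]
  rw [integral_finsetSum _ fun i _ => integrable_dotProduct_pow_four hL4 (J.row i)]
  simp only [integral_dotProduct_pow_four hmeas hindep hmean hvar hm4 hL4,
    row_dotProduct_row hJ hJJ, row_apply, sum_add_distrib, ← mul_sum]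

theorem integral_sum_mulVec_sq_sq (hJ : J.IsSymm) (hJJ : IsIdempotentElem J) :
    ∫ ω, (∑ i, (J *ᵥ fun j => ε j ω) i ^ 2) ^ 2
      = σ2 ^ 2 * (J.trace ^ 2 + 2 * J.trace) + (μ4 - 3 * σ2 ^ 2) * ∑ i, J i i ^ 2 := by
  simp only [sum_mulVec_sq hJ hJJ, sq (_ ⬝ᵥ _),
    integral_dotProduct_mulVec_mul_dotProduct_mulVec hmeas hindep hmean hvar hm4 hL4, hJ.eq,
    hJJ.eq]
  simp only [← sq]
  ring

theorem integral_kurtosisEstimator (hJ : J.IsSymm) (hJJ : IsIdempotentElem J)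
    (htr : J.trace ≠ 0) {π₁ π₂ : ℝ} (hπ₁ : π₁ = ∑ r, J r r ^ 2)
    (hπ₂ : π₂ = ∑ r, ∑ s, J r s ^ 4) :
    ∫ ω, ((∑ i, (J *ᵥ fun j => ε j ω) i ^ 4) / π₂
        - 3 * (π₁ / π₂) * ((∑ i, (J *ᵥ fun j => ε j ω) i ^ 2) / J.trace) ^ 2)
      = μ4 - 3 * σ2 ^ 2
        - 3 * (π₁ / π₂) * ((μ4 - 3 * σ2 ^ 2) * π₁ / J.trace ^ 2 + 2 * σ2 ^ 2 / J.trace) := by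
  have hπ₂0 : π₂ ≠ 0 := by
    refine fun h => htr (sum_eq_zero fun r _ => ?_)
    rw [hπ₂, Fintype.sum_eq_zero_iff_of_nonneg fun _ => by positivity] at h
    have hrow := congrFun h r
    rw [Pi.zero_apply, Fintype.sum_eq_zero_iff_of_nonneg fun _ => by positivity] at hrow
    exact pow_eq_zero_iff (n := 4) (by norm_num) |>.1 (congrFun hrow r)
  simp_rw [div_pow]
  rw [integral_sub ((integrable_sum_mulVec_pow_four hL4).div_const _)
      (((integrable_sum_mulVec_sq_sq hJ hJJ hL4).div_const _).const_mul _),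
    integral_div, integral_const_mul, integral_div,
    integral_sum_mulVec_pow_four hmeas hindep hmean hvar hm4 hL4 hJ hJJ,
    integral_sum_mulVec_sq_sq hmeas hindep hmean hvar hm4 hL4 hJ hJJ, ← hπ₁, ← hπ₂]
  field_simp
  ring

end KurtosisEstimator

noncomputable def centeringMatrix (m : ℕ) : Matrix (Fin m) (Fin m) ℝ :=
  1 - (m : ℝ)⁻¹ • of fun _ _ => 1

lemma centeringMatrix_isSymm (m : ℕ) : (centeringMatrix m).IsSymm :=
  isSymm_one.sub ((IsSymm.ext fun _ _ => rfl).smul _)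

lemma isIdempotentElem_centeringMatrix (m : ℕ) : IsIdempotentElem (centeringMatrix m) := by
  rcases eq_or_ne m 0 with rfl | hm
  · exact Subsingleton.elim _ _
  ext i j
  simp [centeringMatrix, sub_mul, mul_sub, Matrix.mul_apply, Matrix.one_apply, hm]

lemma trace_centeringMatrix {m : ℕ} (hm : m ≠ 0) : (centeringMatrix m).trace = m - 1 := by
  simp [centeringMatrix, trace, hm]

lemma Matrix.IsSymm.kronecker {α ι κ : Type*} [Mul α] {A : Matrix ι ι α} {B : Matrix κ κ α}
    (hA : A.IsSymm) (hB : B.IsSymm) : (A ⊗ₖ B).IsSymm := by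
  show (kroneckerMap (· * ·) A B)ᵀ = kroneckerMap (· * ·) A B
  rw [← kroneckerMap_transpose, hA.eq, hB.eq]

lemma IsIdempotentElem.kronecker {α ι κ : Type*} [CommSemiring α] [Fintype ι] [Fintype κ]
    {A : Matrix ι ι α} {B : Matrix κ κ α} (hA : IsIdempotentElem A) (hB : IsIdempotentElem B) :
    IsIdempotentElem (A ⊗ₖ B) := by
  rw [IsIdempotentElem, ← mul_kronecker_mul, hA.eq, hB.eq]

lemma twoWayJ_eq_kronecker (n T : ℕ) :
    twoWayJ n T = centeringMatrix T ⊗ₖ centeringMatrix n := rfl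

lemma twoWayJ_isSymm (n T : ℕ) : (twoWayJ n T).IsSymm :=
  (centeringMatrix_isSymm T).kronecker (centeringMatrix_isSymm n)

lemma isIdempotentElem_twoWayJ (n T : ℕ) : IsIdempotentElem (twoWayJ n T) :=
  (isIdempotentElem_centeringMatrix T).kronecker (isIdempotentElem_centeringMatrix n)

lemma trace_twoWayJ {n T : ℕ} (hn : n ≠ 0) (hT : T ≠ 0) :
    (twoWayJ n T).trace = (n - 1) * (T - 1) := by
  rw [twoWayJ_eq_kronecker, trace_kronecker, trace_centeringMatrix hT, trace_centeringMatrix hn,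
    mul_comm]

theorem expected_kurtosis_estimator_general {Ω : Type*} [MeasureSpace Ω]
    (n T : ℕ) (hn : 2 ≤ n) (hT : 2 ≤ T)
    (J : Matrix (Fin T × Fin n) (Fin T × Fin n) ℝ) (hJ : J = twoWayJ n T)
    (Nstar : ℕ) (hNstar : Nstar = (n - 1) * (T - 1))
    (π₁ π₂ : ℝ) (hπ₁ : π₁ = ∑ r, (J r r) ^ 2) (hπ₂ : π₂ = ∑ r, ∑ s, (J r s) ^ 4)
    (ε : (Fin T × Fin n) → Ω → ℝ)
    (hmeas : ∀ i, Measurable (ε i))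
    (hindep : iIndepFun ε ℙ)
    (σ2 μ4 : ℝ)
    (hmean : ∀ i, ∫ ω, ε i ω = 0)
    (hvar : ∀ i, ∫ ω, (ε i ω) ^ 2 = σ2)
    (hm4 : ∀ i, ∫ ω, (ε i ω) ^ 4 = μ4)
    (hint4 : ∀ i, Integrable (fun ω => (ε i ω) ^ 4) ℙ)
    (κ : Ω → ℝ)
    (hκ : ∀ ω, κ ω = (∑ i, (J.mulVec (fun j => ε j ω) i) ^ 4) / π₂
        - 3 * (π₁ / π₂) * ((∑ i, (J.mulVec (fun j => ε j ω) i) ^ 2) / (Nstar : ℝ)) ^ 2) :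
    ∫ ω, κ ω = μ4 - 3 * σ2 ^ 2
      - 3 * (π₁ / π₂) * ((μ4 - 3 * σ2 ^ 2) * π₁ / (Nstar : ℝ) ^ 2 + 2 * σ2 ^ 2 / (Nstar : ℝ)) := by
  subst hJ
  have hN : (Nstar : ℝ) = (twoWayJ n T).trace := by
    rw [hNstar, trace_twoWayJ (by omega) (by omega), Nat.cast_mul, Nat.cast_sub (by omega),
      Nat.cast_sub (by omega), Nat.cast_one]
  have hL4 i := memLp_four_of_integrable_pow_four (hmeas i).aestronglyMeasurable (hint4 i)
  simp_rw [hκ, hN]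
  refine integral_kurtosisEstimator hmeas hindep hmean hvar hm4 hL4 (twoWayJ_isSymm n T)
    (isIdempotentElem_twoWayJ n T) ?_ hπ₁ hπ₂
  rw [← hN, hNstar]
  exact_mod_cast (Nat.mul_pos (by omega) (by omega)).ne'

/-- Let `ε` be i.i.d. with mean `0`, second moment `σ²`, fourth moment
`μ₄ < ∞`, `ε* = Jε` with `J` the two-way within-transformation matrix,
`π₁ = Σ_r (J_rr)²`, `π₂ = Σ_r Σ_s (J_rs)⁴`, `N* = (n−1)(T−1)`, and
`κ̃ = Σ_i (ε*_i)⁴/π₂ − 3(π₁/π₂)(Σ_i (ε*_i)²/N*)²`. Then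
`E(κ̃) = μ₄ − 3σ⁴ − 3(π₁/π₂)[(μ₄ − 3σ⁴)π₁/N*² + 2σ⁴/N*]`. -/
theorem expected_kurtosis_estimator {Ω : Type*} [MeasureSpace Ω]
    [IsProbabilityMeasure (ℙ : Measure Ω)] (n T : ℕ) (hn : 2 ≤ n) (hT : 2 ≤ T)
    (J : Matrix (Fin T × Fin n) (Fin T × Fin n) ℝ) (hJ : J = twoWayJ n T)
    (Nstar : ℕ) (hNstar : Nstar = (n - 1) * (T - 1))
    (π₁ π₂ : ℝ) (hπ₁ : π₁ = ∑ r, (J r r) ^ 2) (hπ₂ : π₂ = ∑ r, ∑ s, (J r s) ^ 4)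
    (ε : (Fin T × Fin n) → Ω → ℝ)
    (hmeas : ∀ i, Measurable (ε i))
    (hindep : iIndepFun ε ℙ)
    (hident : ∀ i j : Fin T × Fin n, Measure.map (ε i) ℙ = Measure.map (ε j) ℙ)
    (σ2 μ4 : ℝ)
    (hmean : ∀ i, ∫ ω, ε i ω = 0)
    (hvar : ∀ i, ∫ ω, (ε i ω) ^ 2 = σ2)
    (hm4 : ∀ i, ∫ ω, (ε i ω) ^ 4 = μ4)
    (hint4 : ∀ i, Integrable (fun ω => (ε i ω) ^ 4) ℙ)
    (κ : Ω → ℝ)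
    (hκ : ∀ ω, κ ω = (∑ i, (J.mulVec (fun j => ε j ω) i) ^ 4) / π₂
        - 3 * (π₁ / π₂) * ((∑ i, (J.mulVec (fun j => ε j ω) i) ^ 2) / (Nstar : ℝ)) ^ 2) :
    ∫ ω, κ ω = μ4 - 3 * σ2 ^ 2
      - 3 * (π₁ / π₂) * ((μ4 - 3 * σ2 ^ 2) * π₁ / (Nstar : ℝ) ^ 2 + 2 * σ2 ^ 2 / (Nstar : ℝ)) :=
  expected_kurtosis_estimator_general n T hn hT J hJ Nstar hNstar π₁ π₂ hπ₁ hπ₂ ε hmeas hindep σ2 μ4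
    hmean hvar hm4 hint4 κ hκ
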